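/- Let z > 1 be an integer, let Q be the z×z grid graph, and let U be its top row. Then for every partition (X',Y') of U into two disjoint subsets, there exists a set of min(|X'|,|Y'|) pairwise vertex-disjoint paths in Q, each connecting a vertex of X' to a vertex of Y', with all these endpoints distinct. -/

import Mathlib

/-!
Choose `x ∈ X'` and `y ∈ Y'` such that no other vertex of the top row lying in `X' ∪ Y'` is
between them, and join them along the top row. The remaining terminals are linked recursively
in the grid below the top row, and each of these paths is then extended by one vertical edge at
both ends. Those edges meet the top row only in columns of terminals, which lie outside the
segment from `x` to `y`. Each pair costs one row, and `min (#X') (#Y') ≤ z`.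
-/

/-- The `z × z` grid graph: vertices `(i,j)` with `0 ≤ i,j < z` (0-indexed), and an edge
between `(i,j)` and `(i',j')` iff `|i-i'| + |j-j'| = 1`. -/
def gridGraph (z : ℕ) : SimpleGraph (Fin z × Fin z) where
  Adj a b := ((a.1 : ℤ) - (b.1 : ℤ)).natAbs + ((a.2 : ℤ) - (b.2 : ℤ)).natAbs = 1
  symm := ⟨by intro a b h; omega⟩
  loopless := ⟨by intro a h; simp at h⟩

open Finset SimpleGraph

theorem Finset.exists_pair_without_mem_between {α : Type*} [LinearOrder α] {X Y : Finset α}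
    (hX : X.Nonempty) (hY : Y.Nonempty) :
    ∃ x ∈ X, ∃ y ∈ Y, ∀ e ∈ X ∪ Y, e ∈ Set.uIcc x y → e = x ∨ e = y := by
  classical
  let N : α → α → ℕ := fun a b => #{e ∈ X ∪ Y | e ∈ Set.uIcc a b}
  obtain ⟨⟨x, y⟩, hxy, hmin⟩ := exists_min_image (X ×ˢ Y) (fun q => N q.1 q.2) (hX.product hY)
  rw [mem_product] at hxy
  have fewer : ∀ a b, Set.uIcc a b ⊆ Set.uIcc x y → ∀ w ∈ X ∪ Y, w ∈ Set.uIcc x y →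
      w ∉ Set.uIcc a b → N a b < N x y := fun a b hab w hw hwxy hwab =>
    card_lt_card ((ssubset_iff_of_subset (monotone_filter_right _ fun _ _ h => hab h)).2
      ⟨w, mem_filter.2 ⟨hw, hwxy⟩, fun h => hwab (mem_filter.1 h).2⟩)
  refine ⟨x, hxy.1, y, hxy.2, fun e he hexy => ?_⟩
  by_contra! hne
  simp only [Set.mem_uIcc] at hexy
  rcases mem_union.1 he with heX | heY
  · refine (hmin (e, y) (mem_product.2 ⟨heX, hxy.2⟩)).not_gt
      (fewer e y (Set.uIcc_subset_uIcc_right (Set.mem_uIcc.2 hexy)) x (mem_union_left _ hxy.1)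
        Set.left_mem_uIcc ?_)
    simp only [Set.mem_uIcc]
    grind
  · refine (hmin (x, e) (mem_product.2 ⟨hxy.1, heY⟩)).not_gt
      (fewer x e (Set.uIcc_subset_uIcc_left (Set.mem_uIcc.2 hexy)) y (mem_union_right _ hxy.2)
        Set.right_mem_uIcc ?_)
    simp only [Set.mem_uIcc]
    grind

theorem Finset.mem_of_snd_mem_image_snd {α β : Type*} [DecidableEq β] {A : Finset (α × β)}
    {v : α × β} (hA : ∀ u ∈ A, u.1 = v.1) (h : v.2 ∈ A.image Prod.snd) : v ∈ A := by
  obtain ⟨u, hu, huv⟩ := mem_image.1 h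
  exact Prod.ext (hA u hu) huv ▸ hu

namespace gridGraph

variable {z : ℕ}

theorem adj_of_snd_eq_succ (r : Fin z) {a b : Fin z} (h : (b : ℕ) = a + 1) :
    (gridGraph z).Adj (r, a) (r, b) := by
  simp only [gridGraph]; omega

theorem adj_of_fst_eq_succ {r r' : Fin z} (c : Fin z) (h : (r' : ℕ) = r + 1) :
    (gridGraph z).Adj (r, c) (r', c) := by
  simp only [gridGraph]; omega

theorem exists_isPath_row_of_le (r a : Fin z) : ∀ (k : ℕ) (b : Fin z), (b : ℕ) = a + k →
    ∃ p : (gridGraph z).Walk (r, a) (r, b), p.IsPath ∧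
      ∀ v ∈ p.support, v.1 = r ∧ v.2 ∈ Set.Icc a b
  | 0, b, hb => by
    obtain rfl : a = b := Fin.ext hb.symm
    exact ⟨.nil, by simp, by simp⟩
  | k + 1, b, hb => by
    let b' : Fin z := ⟨a + k, by omega⟩
    obtain ⟨p, hp, hsupp⟩ := exists_isPath_row_of_le r a k b' rfl
    have hbb' : b' < b := Fin.lt_def.2 (by simp [b', hb])
    refine ⟨p.concat (adj_of_snd_eq_succ r (by simp [b', hb]; omega)),
      hp.concat (fun h => (hsupp _ h).2.2.not_gt hbb') _, fun v hv => ?_⟩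
    simp only [Walk.support_concat, List.mem_append, List.mem_singleton] at hv
    rcases hv with hv | rfl
    · exact ⟨(hsupp v hv).1, (hsupp v hv).2.1, (hsupp v hv).2.2.trans hbb'.le⟩
    · exact ⟨rfl, Fin.le_def.2 (by dsimp only; omega), le_rfl⟩

theorem exists_isPath_row (r a b : Fin z) :
    ∃ p : (gridGraph z).Walk (r, a) (r, b), p.IsPath ∧
      ∀ v ∈ p.support, v.1 = r ∧ v.2 ∈ Set.uIcc a b := by
  rcases le_total a b with hab | hba
  · obtain ⟨p, hp, hsupp⟩ := exists_isPath_row_of_le r a (b - a) b (by omega)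
    exact ⟨p, hp, fun v hv => ⟨(hsupp v hv).1, Set.Icc_subset_uIcc (hsupp v hv).2⟩⟩
  · obtain ⟨p, hp, hsupp⟩ := exists_isPath_row_of_le r b (a - b) a (by omega)
    refine ⟨p.reverse, hp.reverse, fun v hv => ?_⟩
    rw [Walk.support_reverse, List.mem_reverse] at hv
    exact ⟨(hsupp v hv).1, Set.Icc_subset_uIcc' (hsupp v hv).2⟩

theorem exists_isPath_lift {r : Fin z} {u w : Fin z × Fin z} (q : (gridGraph z).Walk u w)
    (hq : q.IsPath) (hu : (u.1 : ℕ) = r + 1) (hw : (w.1 : ℕ) = r + 1)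
    (hrow : ∀ v ∈ q.support, (r : ℕ) < v.1) (huw : u.2 ≠ w.2) :
    ∃ p : (gridGraph z).Walk (r, u.2) (r, w.2), p.IsPath ∧
      ∀ v ∈ p.support, v ∈ q.support ∨ ∃ x ∈ [u, w], v = (r, x.2) := by
  have not_mem : ∀ c, ((r, c) : Fin z × Fin z) ∉ q.support := fun c h => (hrow _ h).false
  refine ⟨.cons (adj_of_fst_eq_succ u.2 hu) (q.concat (adj_of_fst_eq_succ w.2 hw).symm), ?_, ?_⟩
  · simp only [Walk.cons_isPath_iff, Walk.support_concat, List.mem_append, List.mem_singleton]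
    refine ⟨hq.concat (not_mem _) _, ?_⟩
    rintro (h | h)
    · exact not_mem _ h
    · exact huw (Prod.ext_iff.1 h).2
  · intro v hv
    simp only [Walk.support_cons, Walk.support_concat, List.mem_cons,
      List.mem_append, List.not_mem_nil, or_false] at hv
    rcases hv with rfl | hv | rfl
    · exact .inr ⟨u, by simp, rfl⟩
    · exact .inl hv
    · exact .inr ⟨w, by simp, rfl⟩

-- Walks are bundled with their ends so that a family can be extended by `Fin.cons`.
structure IsLinkageBelow (r : ℕ) (X Y : Finset (Fin z)) {m : ℕ}
    (P : Fin m → Σ u v : Fin z × Fin z, (gridGraph z).Walk u v) : Prop where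
  start_row : ∀ i, ((P i).1.1 : ℕ) = r
  start_mem : ∀ i, (P i).1.2 ∈ X
  end_row : ∀ i, ((P i).2.1.1 : ℕ) = r
  end_mem : ∀ i, (P i).2.1.2 ∈ Y
  isPath : ∀ i, (P i).2.2.IsPath
  disjoint : Pairwise fun i j => (P i).2.2.support.Disjoint (P j).2.2.support
  row_le : ∀ i, ∀ v ∈ (P i).2.2.support, r ≤ (v.1 : ℕ)

namespace IsLinkageBelow

variable {r m : ℕ} {X Y : Finset (Fin z)}
  {P : Fin m → Σ u v : Fin z × Fin z, (gridGraph z).Walk u v}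

theorem mono (hP : IsLinkageBelow r X Y P) {X' Y' : Finset (Fin z)} (hX : X ⊆ X') (hY : Y ⊆ Y') :
    IsLinkageBelow r X' Y' P :=
  { hP with start_mem := fun i => hX (hP.start_mem i), end_mem := fun i => hY (hP.end_mem i) }

theorem cons (hP : IsLinkageBelow r X Y P) {a b : Fin z × Fin z} (p : (gridGraph z).Walk a b)
    (ha : (a.1 : ℕ) = r) (haX : a.2 ∈ X) (hb : (b.1 : ℕ) = r) (hbY : b.2 ∈ Y) (hp : p.IsPath)
    (hrow : ∀ v ∈ p.support, r ≤ (v.1 : ℕ)) (hdisj : ∀ i, p.support.Disjoint (P i).2.2.support) :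
    IsLinkageBelow r X Y (Fin.cons ⟨a, b, p⟩ P : Fin (m + 1) → _) where
  start_row := Fin.cases ha hP.start_row
  start_mem := Fin.cases haX hP.start_mem
  end_row := Fin.cases hb hP.end_row
  end_mem := Fin.cases hbY hP.end_mem
  isPath := Fin.cases hp hP.isPath
  disjoint := pairwise_fin_succ_iff.2
    ⟨fun i => (hdisj i).symm, hdisj, fun _ _ hij => hP.disjoint hij⟩
  row_le := Fin.cases hrow hP.row_le

-- Each path is extended by the vertex above each of its two ends.
theorem exists_lift (hP : IsLinkageBelow (r + 1) X Y P) (hXY : Disjoint X Y) :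
    ∃ P' : Fin m → Σ u v : Fin z × Fin z, (gridGraph z).Walk u v, IsLinkageBelow r X Y P' ∧
      ∀ i, ∀ v ∈ (P' i).2.2.support, (v.1 : ℕ) = r → v.2 ∈ X ∪ Y := by
  have hr : ∀ i, r < z := fun i => by have := ((P i).1.1).isLt; have := hP.start_row i; omega
  have hcol : ∀ i, (P i).1.2 ≠ (P i).2.1.2 := fun i h =>
    disjoint_left.1 hXY (hP.start_mem i) (h ▸ hP.end_mem i)
  choose p hp hsupp using fun i => exists_isPath_lift (r := ⟨r, hr i⟩) (P i).2.2
    (hP.isPath i) (hP.start_row i) (hP.end_row i) (hP.row_le i) (hcol i)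
  have not_mem : ∀ i (v : Fin z × Fin z), (v.1 : ℕ) = r → v ∉ (P i).2.2.support :=
    fun i v hv h => by have := hP.row_le i v h; omega
  have ends : ∀ i, ∀ x ∈ [(P i).1, (P i).2.1],
      x ∈ (P i).2.2.support ∧ (x.1 : ℕ) = r + 1 ∧ x.2 ∈ X ∪ Y := by
    intro i x hx
    rcases List.mem_pair.1 hx with rfl | rfl
    · exact ⟨Walk.start_mem_support _, hP.start_row i, mem_union_left _ (hP.start_mem i)⟩
    · exact ⟨Walk.end_mem_support _, hP.end_row i, mem_union_right _ (hP.end_mem i)⟩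
  refine ⟨fun i => ⟨_, _, p i⟩,
    ⟨fun _ => rfl, hP.start_mem, fun _ => rfl, hP.end_mem, hp, ?_, ?_⟩, ?_⟩
  · intro i j hij v hvi hvj
    rcases hsupp i v hvi with hvi | ⟨x, hx, rfl⟩ <;> rcases hsupp j _ hvj with hvj | ⟨y, hy, hxy⟩
    · exact hP.disjoint hij hvi hvj
    · exact not_mem i _ (by rw [hxy]) hvi
    · exact not_mem j _ rfl hvj
    · have hxy' : x = y := Prod.ext (Fin.ext (by rw [(ends i x hx).2.1, (ends j y hy).2.1]))
        (Prod.ext_iff.1 hxy).2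
      exact hP.disjoint hij (ends i x hx).1 (hxy' ▸ (ends j y hy).1)
  · intro i v hv
    rcases hsupp i v hv with hv | ⟨x, -, rfl⟩
    · exact (hP.row_le i v hv).trans' (Nat.le_succ r)
    · exact le_rfl
  · intro i v hv hvr
    rcases hsupp i v hv with hv | ⟨x, hx, rfl⟩
    · exact absurd hv (not_mem i v hvr)
    · exact (ends i x hx).2.2

end IsLinkageBelow

theorem exists_isLinkageBelow :
    ∀ (m r : ℕ) (X Y : Finset (Fin z)), r + m ≤ z → Disjoint X Y → m ≤ #X → m ≤ #Y →
      ∃ P : Fin m → Σ u v : Fin z × Fin z, (gridGraph z).Walk u v, IsLinkageBelow r X Y P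
  | 0, r, X, Y, _, _, _, _ => ⟨finZeroElim, by constructor <;> intro i <;> exact i.elim0⟩
  | m + 1, r, X, Y, hrm, hXY, hX, hY => by
    obtain ⟨c, hc, c', hc', hbetween⟩ :=
      exists_pair_without_mem_between (X := X) (Y := Y) (card_pos.1 (by omega))
        (card_pos.1 (by omega))
    have hXY' : Disjoint (X.erase c) (Y.erase c') := hXY.mono (erase_subset _ _) (erase_subset _ _)
    obtain ⟨P, hP⟩ := exists_isLinkageBelow m (r + 1) (X.erase c) (Y.erase c') (by omega) hXY'
      (by rw [card_erase_of_mem hc]; omega) (by rw [card_erase_of_mem hc']; omega)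
    obtain ⟨P', hP', hrow⟩ := hP.exists_lift hXY'
    obtain ⟨p, hp, hpsupp⟩ := exists_isPath_row ⟨r, by omega⟩ c c'
    have hout : ∀ e ∈ X.erase c ∪ Y.erase c', e ∉ Set.uIcc c c' := by
      intro e he hmem
      have heXY : e ∈ X ∪ Y := union_subset_union (erase_subset _ _) (erase_subset _ _) he
      rcases mem_union.1 he with h | h <;> rcases hbetween e heXY hmem with rfl | rfl
      · exact (mem_erase.1 h).1 rfl
      · exact disjoint_left.1 hXY (mem_erase.1 h).2 hc'
      · exact disjoint_left.1 hXY hc (mem_erase.1 h).2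
      · exact (mem_erase.1 h).1 rfl
    refine ⟨_, (hP'.mono (erase_subset _ _) (erase_subset _ _)).cons p rfl hc rfl hc' hp
      (fun v hv => by rw [(hpsupp v hv).1]) fun i v hv hv' => ?_⟩
    have hvr : (v.1 : ℕ) = r := by rw [(hpsupp v hv).1]
    exact hout _ (hrow i v hv' hvr) (hpsupp v hv).2

end gridGraph

theorem stmt_6_general (z : ℕ) (X' Y' : Finset (Fin z × Fin z))
    (hdisj : Disjoint X' Y')
    (hunion : X' ∪ Y' = Finset.univ.filter fun v : Fin z × Fin z => (v.1 : ℕ) = 0) :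
    ∃ (s t : Fin (min X'.card Y'.card) → Fin z × Fin z)
      (p : ∀ i, (gridGraph z).Walk (s i) (t i)),
      (∀ i, s i ∈ X') ∧ (∀ i, t i ∈ Y') ∧ (∀ i, (p i).IsPath) ∧
      (∀ i j, i ≠ j → ∀ v ∈ (p i).support, v ∉ (p j).support) := by
  have hrow : ∀ v ∈ X' ∪ Y', (v.1 : ℕ) = 0 := fun v hv => by simpa [hunion] using hv
  have hinj : Set.InjOn Prod.snd (↑X' ∪ ↑Y' : Set (Fin z × Fin z)) := fun u hu v hv huv =>
    Prod.ext (Fin.ext (by rw [hrow u (by simpa using hu), hrow v (by simpa using hv)])) huv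
  have hX : #(X'.image Prod.snd) = #X' := card_image_of_injOn (hinj.mono Set.subset_union_left)
  have hY : #(Y'.image Prod.snd) = #Y' := card_image_of_injOn (hinj.mono Set.subset_union_right)
  have hXY : Disjoint (X'.image Prod.snd) (Y'.image Prod.snd) := by
    rw [disjoint_iff_inter_eq_empty, ← image_inter_of_injOn _ _ hinj,
      disjoint_iff_inter_eq_empty.1 hdisj, image_empty]
  have hz : #(X'.image Prod.snd) ≤ z := by simpa using card_le_univ (X'.image Prod.snd)
  obtain ⟨P, hP⟩ := gridGraph.exists_isLinkageBelow (min #X' #Y') 0 _ _ (by omega) hXY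
    (by omega) (by omega)
  have hsame_row : ∀ u ∈ X' ∪ Y', ∀ v : Fin z × Fin z, (v.1 : ℕ) = 0 → u.1 = v.1 :=
    fun u hu v hv => Fin.ext (by rw [hrow u hu, hv])
  refine ⟨fun i => (P i).1, fun i => (P i).2.1, fun i => (P i).2.2, fun i => ?_, fun i => ?_,
    hP.isPath, fun i j hij => hP.disjoint hij⟩
  · exact mem_of_snd_mem_image_snd (fun u hu => hsame_row u (mem_union_left _ hu) _
      (hP.start_row i)) (hP.start_mem i)
  · exact mem_of_snd_mem_image_snd (fun u hu => hsame_row u (mem_union_right _ hu) _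
      (hP.end_row i)) (hP.end_mem i)

/-- Let `z > 1`, let `Q` be the `z × z` grid graph and `U` its top row
(the vertices whose first coordinate is `0`). For every partition `(X',Y')` of `U` into two
disjoint subsets there is a set of `min(|X'|,|Y'|)` pairwise vertex-disjoint paths in `Q`,
each connecting a vertex of `X'` to a vertex of `Y'` (all endpoints being distinct). -/
theorem stmt_6 (z : ℕ) (hz : 1 < z) (X' Y' : Finset (Fin z × Fin z))
    (hdisj : Disjoint X' Y')
    (hunion : X' ∪ Y' = Finset.univ.filter fun v : Fin z × Fin z => (v.1 : ℕ) = 0) :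
    ∃ (s t : Fin (min X'.card Y'.card) → Fin z × Fin z)
      (p : ∀ i, (gridGraph z).Walk (s i) (t i)),
      (∀ i, s i ∈ X') ∧ (∀ i, t i ∈ Y') ∧ (∀ i, (p i).IsPath) ∧
      (∀ i j, i ≠ j → ∀ v ∈ (p i).support, v ∉ (p j).support) :=
  stmt_6_general z X' Y' hdisj hunion
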